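/- (Bosco univalence is preserved) Suppose n > 3f and b ≤ f. Let ℓ be a list of booleans of length n - b with 2 * (count of B in ℓ) > n + f. Then for every ℓ' ∈ Netwk(ℓ), the count of B in ℓ' is strictly greater than the count of ¬B in ℓ', hence the majority value of ℓ' equals B (with the convention that ties in count go to true). -/
import Mathlib


def Netwk {τ : Type*} (n f b : ℕ) (ℓ ℓ' : List τ) : Prop :=
  ∃ a : List τ, a.length ≤ b ∧ ∃ p : List τ,
    (ℓ ++ a).Perm p ∧ ℓ' <+: p ∧ n - f ≤ ℓ'.length

def majList (ℓ : List Bool) : Bool := decide (ℓ.count false ≤ ℓ.count true)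

lemma count_tf (l : List Bool) : l.count true + l.count false = l.length := by
  induction l with
  | nil => rfl
  | cons h t ih => cases h <;> simp [List.count_cons] <;> omega

lemma count_bool_add (l : List Bool) (B : Bool) :
    l.count B + l.count (!B) = l.length := by
  have := count_tf l
  cases B <;> simp [Nat.add_comm] at this ⊢ <;> omega

theorem bosco_univalence_preserved (n f b : ℕ) (B : Bool) (ℓ : List Bool)
    (hn : n > 3 * f) (hb : b ≤ f) (hlen : ℓ.length = n - b)
    (hUC : 2 * ℓ.count B > n + f) :
    ∀ ℓ', Netwk n f b ℓ ℓ' → ℓ'.count B > ℓ'.count (!B) ∧ majList ℓ' = B := by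
  rintro ℓ' ⟨a, ha, p, hperm, ⟨t, rfl⟩, hlen'⟩
  have hcB : ℓ'.count B + t.count B = ℓ.count B + a.count B := by
    rw [← List.count_append, ← hperm.count_eq, List.count_append]
  have hcB' : ℓ'.count (!B) + t.count (!B) = ℓ.count (!B) + a.count (!B) := by
    rw [← List.count_append, ← hperm.count_eq, List.count_append]
  have hlp : ℓ'.length + t.length = ℓ.length + a.length := by
    rw [← List.length_append, ← hperm.length_eq, List.length_append]
  have hcl := count_bool_add ℓ B
  have hcl' := count_bool_add ℓ' B
  have hct := count_bool_add t B
  have hca := count_bool_add a B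
  have hmain : ℓ'.count B > ℓ'.count (!B) := by omega
  refine ⟨hmain, ?_⟩
  cases B with
  | false =>
    simp only [Bool.not_false] at hmain
    simp [majList, Nat.not_le.mpr hmain]
  | true =>
    simp only [Bool.not_true] at hmain
    simp [majList, Nat.le_of_lt hmain]
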